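/- arXiv:2411.02678 — 3 statements merged into one kernel-verified Lean document; each statement's English description precedes it below -/
import Mathlib

section
/- If τ_r = 1/(2 + D - r) for r = 1,...,D, then γ_D := Σ_{r=1}^D (1-τ_r) τ_r ∏_{k=1}^{r-1} (1-τ_k)^2 equals D/(2(1+D)). -/
open Finset

/-!
With `τ_k = 1/(2 + D - k)` we have `1 - τ_k = (1 + D - k)/(2 + D - k)`, so the partial products
telescope: `∏_{k ≤ r} (1 - τ_k) = (1 + D - r)/(1 + D)`. Hence the `r`-th summand collapses to
`(1 + D - r)/(1 + D)^2`, and summing the arithmetic progression `1 + D - r` gives `D(1 + D)/2`.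
-/

theorem sum_Icc_one_natCast (n : ℕ) : ∑ i ∈ Icc 1 n, (i : ℝ) = n * (n + 1) / 2 := by
  induction n with
  | zero => simp
  | succ n ih =>
    rw [sum_Icc_succ_top (by omega), ih]
    push_cast
    ring

section

variable {D : ℕ} {τ : ℕ → ℝ} (hτ : ∀ r, 1 ≤ r → r ≤ D → τ r = 1 / (2 + (D : ℝ) - r))
include hτ

theorem prod_Icc_one_sub_eq {r : ℕ} (hr : r ≤ D) :
    ∏ k ∈ Icc 1 r, (1 - τ k) = (1 + (D : ℝ) - r) / (1 + D) := by
  induction r with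
  | zero => simp [(by positivity : (1 : ℝ) + D ≠ 0)]
  | succ n ih =>
    have hn : (n : ℝ) + 1 ≤ D := by exact_mod_cast hr
    have hden : (2 : ℝ) + D - (n + 1) ≠ 0 := by linarith
    rw [prod_Icc_succ_top (by omega), ih (by omega), hτ (n + 1) (by omega) hr]
    push_cast
    field_simp
    ring

theorem summand_eq {r : ℕ} (hr1 : 1 ≤ r) (hrD : r ≤ D) :
    (1 - τ r) * τ r * ∏ k ∈ Icc 1 (r - 1), (1 - τ k) ^ 2
      = (1 + (D : ℝ) - r) / (1 + D) ^ 2 := by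
  have hr : (r : ℝ) ≤ D := by exact_mod_cast hrD
  have hden : (2 : ℝ) + D - r ≠ 0 := by linarith
  rw [prod_pow, prod_Icc_one_sub_eq hτ (by omega), hτ r hr1 hrD, Nat.cast_sub hr1]
  field_simp
  ring

end

theorem stmt_0_general (D : ℕ) (τ : ℕ → ℝ)
    (hτ : ∀ r, 1 ≤ r → r ≤ D → τ r = 1 / (2 + (D : ℝ) - r)) :
    ∑ r ∈ Finset.Icc 1 D,
        (1 - τ r) * τ r * ∏ k ∈ Finset.Icc 1 (r - 1), (1 - τ k) ^ 2
      = (D : ℝ) / (2 * (1 + D)) := by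
  rw [sum_congr rfl fun r hr => summand_eq hτ (mem_Icc.1 hr).1 (mem_Icc.1 hr).2, ← sum_div,
    sum_sub_distrib, sum_const, Nat.card_Icc, sum_Icc_one_natCast]
  simp only [Nat.add_sub_cancel, nsmul_eq_mul]
  have hD : (1 : ℝ) + D ≠ 0 := by positivity
  field_simp
  ring

/-- If τ_r = 1/(2+D-r), then γ_D = Σ_{r=1}^D (1-τ_r)τ_r ∏_{k=1}^{r-1}(1-τ_k)^2 = D/(2(1+D)). -/
theorem stmt_0 (D : ℕ) (hD : 0 < D) (τ : ℕ → ℝ)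
    (hτ : ∀ r, 1 ≤ r → r ≤ D → τ r = 1 / (2 + (D : ℝ) - r)) :
    ∑ r ∈ Finset.Icc 1 D,
        (1 - τ r) * τ r * ∏ k ∈ Finset.Icc 1 (r - 1), (1 - τ k) ^ 2
      = (D : ℝ) / (2 * (1 + D)) :=
  stmt_0_general D τ hτ
end

section
/- For real parameters τ_1,...,τ_D ∈ [0,1], define γ_D = ω_{D-1} + (1/3)∏_{k=1}^{D-1}(1-τ_k)^2 where ω_d = Σ_{r=1}^d ∏_{k=1}^{r-1}(1-τ_k)^2 (1-τ_r)τ_r. Then the maximum of γ_D over all choices of τ_1,...,τ_{D-1} equals (D+1)/(2(D+2)). -/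
/-!
Peel off the last parameter: with `P = ∏_{k ≤ n} (1 - τ_k)²` and `t = τ_{n+1}`,
the objective with tail coefficient `c` becomes the objective for `n` parameters plus
`P · ((1 - t) t + c (1 - t)²)`. For `c = a / (2(a + 1))` the maximum of that quadratic in `t`
is `(a + 1) / (2(a + 2))`, attained at `t = 1 / (a + 2)`, so the coefficient `a / (2(a + 1))`
propagates to `(a + n) / (2(a + n + 1))` after `n` steps. The theorem is the case `a = 2`,
`n = D - 1`.
-/

open Finset

namespace GammaMax

def omegaSum (τ : ℕ → ℝ) (d : ℕ) : ℝ :=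
  ∑ r ∈ Icc 1 d, (∏ k ∈ Icc 1 (r - 1), (1 - τ k) ^ 2) * (1 - τ r) * τ r

def tailProd (τ : ℕ → ℝ) (d : ℕ) : ℝ :=
  ∏ k ∈ Icc 1 d, (1 - τ k) ^ 2

noncomputable def tailCoeff (a : ℝ) : ℝ :=
  a / (2 * (a + 1))

lemma tailProd_nonneg (τ : ℕ → ℝ) (d : ℕ) : 0 ≤ tailProd τ d :=
  prod_nonneg fun _ _ => sq_nonneg _

lemma omegaSum_succ_add_mul_tailProd (τ : ℕ → ℝ) (n : ℕ) (c : ℝ) :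
    omegaSum τ (n + 1) + c * tailProd τ (n + 1) =
      omegaSum τ n +
        tailProd τ n * ((1 - τ (n + 1)) * τ (n + 1) + c * (1 - τ (n + 1)) ^ 2) := by
  rw [omegaSum, tailProd, sum_Icc_succ_top (by omega), prod_Icc_succ_top (by omega),
    Nat.add_sub_cancel, ← omegaSum, ← tailProd]
  ring

lemma tailCoeff_succ_sub (x t : ℝ) (hx : -1 < x) :
    tailCoeff (x + 1) - ((1 - t) * t + tailCoeff x * (1 - t) ^ 2) =
      ((x + 2) * t - 1) ^ 2 / (2 * (x + 1) * (x + 2)) := by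
  have hx1 : x + 1 ≠ 0 := by linarith
  have hx2 : x + 1 + 1 ≠ 0 := by linarith
  have hx2' : x + 2 ≠ 0 := by linarith
  rw [tailCoeff, tailCoeff]
  field_simp
  ring

lemma quadratic_le_tailCoeff_succ (x t : ℝ) (hx : -1 < x) :
    (1 - t) * t + tailCoeff x * (1 - t) ^ 2 ≤ tailCoeff (x + 1) := by
  have h := tailCoeff_succ_sub x t hx
  have hden : 0 < 2 * (x + 1) * (x + 2) := mul_pos (mul_pos two_pos (by linarith)) (by linarith)
  linarith [div_nonneg (sq_nonneg ((x + 2) * t - 1)) hden.le]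

lemma quadratic_eq_tailCoeff_succ (x : ℝ) (hx : -1 < x) :
    (1 - 1 / (x + 2)) * (1 / (x + 2)) + tailCoeff x * (1 - 1 / (x + 2)) ^ 2 =
      tailCoeff (x + 1) := by
  have h := tailCoeff_succ_sub x (1 / (x + 2)) hx
  rw [mul_one_div_cancel (by linarith), sub_self, zero_pow two_ne_zero, zero_div] at h
  linarith

lemma omegaSum_add_mul_tailProd_le (τ : ℕ → ℝ) (n : ℕ) (a : ℝ) (ha : -1 < a) :
    omegaSum τ n + tailCoeff a * tailProd τ n ≤ tailCoeff (a + n) := by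
  induction n generalizing a with
  | zero => simp [omegaSum, tailProd]
  | succ n ih =>
    rw [omegaSum_succ_add_mul_tailProd]
    set t := τ (n + 1)
    calc omegaSum τ n + tailProd τ n * ((1 - t) * t + tailCoeff a * (1 - t) ^ 2)
        ≤ omegaSum τ n + tailProd τ n * tailCoeff (a + 1) := by
          gcongr
          · exact tailProd_nonneg τ n
          · exact quadratic_le_tailCoeff_succ a _ ha
      _ ≤ tailCoeff (a + 1 + n) := by linarith [ih (a + 1) (by linarith)]
      _ = tailCoeff (a + ↑(n + 1)) := by push_cast; ring_nf

/-- The bound of `omegaSum_add_mul_tailProd_le` for `a = b - n` is attained at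
`τ k = 1 / (b + 2 - k)`. -/
lemma omegaSum_add_mul_tailProd_eq (τ : ℕ → ℝ) (n : ℕ) (b : ℝ) (hn : (n : ℝ) < b + 1)
    (hτ : ∀ k ∈ Icc 1 n, τ k = 1 / (b + 2 - k)) :
    omegaSum τ n + tailCoeff (b - n) * tailProd τ n = tailCoeff b := by
  induction n with
  | zero => simp [omegaSum, tailProd]
  | succ n ih =>
    push_cast at hn ⊢
    have hlast : τ (n + 1) = 1 / (b - (n + 1) + 2) := by
      rw [hτ (n + 1) (by simp)]; push_cast; ring_nf
    have hquad := quadratic_eq_tailCoeff_succ (b - (n + 1)) (by linarith)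
    rw [← hlast, show b - (n + 1) + 1 = b - n by ring] at hquad
    rw [omegaSum_succ_add_mul_tailProd, hquad]
    rw [← ih (by linarith) fun k hk => hτ k (Icc_subset_Icc_right n.le_succ hk)]
    ring

end GammaMax

open GammaMax in
/-- The maximum of γ_D = ω_{D-1} + (1/3)∏_{k=1}^{D-1}(1-τ_k)^2 over τ ∈ [0,1]
equals (D+1)/(2(D+2)), where ω_d = Σ_{r=1}^d ∏_{k=1}^{r-1}(1-τ_k)^2 (1-τ_r)τ_r. -/
theorem stmt_2 (D : ℕ) (hD : 0 < D) :
    IsGreatest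
      { γ : ℝ | ∃ τ : ℕ → ℝ, (∀ k, τ k ∈ Set.Icc (0 : ℝ) 1) ∧
          γ = (∑ r ∈ Finset.Icc 1 (D - 1),
                  (∏ k ∈ Finset.Icc 1 (r - 1), (1 - τ k) ^ 2) * (1 - τ r) * τ r)
              + (1 / 3) * ∏ k ∈ Finset.Icc 1 (D - 1), (1 - τ k) ^ 2 }
      ((D + 1 : ℝ) / (2 * (D + 2))) := by
  have hcast : ((D - 1 : ℕ) : ℝ) = D - 1 := by rw [Nat.cast_sub hD, Nat.cast_one]
  have hthird : tailCoeff 2 = 1 / 3 := by norm_num [tailCoeff]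
  have hmax : tailCoeff (D + 1) = (D + 1 : ℝ) / (2 * (D + 2)) := by
    rw [tailCoeff]; ring_nf
  set τ : ℕ → ℝ := fun k => if k < D then 1 / ((D : ℝ) + 3 - k) else 0
  refine ⟨⟨τ, fun k => ?_, ?_⟩, ?_⟩
  · simp only [τ]
    split_ifs with hk
    · have : (k : ℝ) + 1 ≤ D := by exact_mod_cast hk
      exact ⟨div_nonneg zero_le_one (by linarith), (div_le_one (by linarith)).2 (by linarith)⟩
    · simp
  · have h := omegaSum_add_mul_tailProd_eq τ (D - 1) (D + 1) (by rw [hcast]; linarith)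
      fun k hk => by
        rw [mem_Icc] at hk
        simp only [τ, if_pos (show k < D by omega)]
        ring_nf
    rw [hcast, show (D + 1 : ℝ) - (D - 1) = 2 by ring, hthird, hmax] at h
    exact h.symm
  · rintro γ ⟨τ, -, rfl⟩
    have h := omegaSum_add_mul_tailProd_le τ (D - 1) 2 (by norm_num)
    rwa [hthird, hcast, show (2 : ℝ) + (D - 1) = D + 1 by ring, hmax] at h
end

section
/- Let τ_1,...,τ_D ∈ [0,1) with x_r = ∏_{j=1}^r(1-τ_j) > 0, γ_{D,r} = x_r[(1-x_r)^{M-2} - (1-x_{r-1})^{M-2}], γ_D = Σ_r γ_{D,r}, and β_D = Σ_r γ_{D,r} x_r. Then γ_D^2 ≤ β_D. -/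
/-!
The weights `γ_{D,r}` are nonnegative because `x` is decreasing with values in `(0, 1]`, and
`γ_{D,r} / x_r` telescopes to `(1 - x_D)^{M-2} - (1 - x_0)^{M-2} ≤ 1`. Cauchy–Schwarz applied to
`√(γ x)` and `√(γ / x)` then gives `(∑ γ)^2 ≤ (∑ γ x) (∑ γ / x) ≤ ∑ γ x`.
-/

open Finset

lemma sq_sum_le_sum_mul_mul_sum_div {ι R : Type*} [Field R] [LinearOrder R]
    [IsStrictOrderedRing R] (s : Finset ι) {w x : ι → R}
    (hw : ∀ i ∈ s, 0 ≤ w i) (hx : ∀ i ∈ s, 0 < x i) :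
    (∑ i ∈ s, w i) ^ 2 ≤ (∑ i ∈ s, w i * x i) * ∑ i ∈ s, w i / x i :=
  sum_sq_le_sum_mul_sum_of_sq_le_mul s (fun i hi => mul_nonneg (hw i hi) (hx i hi).le)
    (fun i hi => div_nonneg (hw i hi) (hx i hi).le)
    (fun i hi => le_of_eq (by field_simp [(hx i hi).ne']))

lemma antitone_prod_Icc_one {R : Type*} [CommSemiring R] [PartialOrder R]
    [IsOrderedRing R] {a : ℕ → R} (h0 : ∀ j, 0 ≤ a j) (h1 : ∀ j, a j ≤ 1) :
    Antitone fun r => ∏ j ∈ Icc 1 r, a j :=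
  fun _ _ hmn => prod_le_prod_of_subset_of_le_one (Icc_subset_Icc_right hmn)
    (fun j _ => h0 j) (fun j _ _ => h1 j)

lemma sum_Icc_one_sub_pred {M : Type*} [AddCommGroup M] (f : ℕ → M) (n : ℕ) :
    ∑ r ∈ Icc 1 n, (f r - f (r - 1)) = f n - f 0 := by
  induction n with
  | zero => simp
  | succ n ih =>
    rw [sum_Icc_succ_top (Nat.le_add_left 1 n), ih, Nat.add_sub_cancel]
    abel

lemma sum_Icc_one_pow_one_sub_sub_le_one {R : Type*} [CommRing R] [LinearOrder R]
    [IsStrictOrderedRing R] {x : ℕ → R} (n : ℕ) {D : ℕ} (hx0 : x 0 = 1)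
    (hxD₀ : 0 ≤ x D) (hxD₁ : x D ≤ 1) :
    ∑ r ∈ Icc 1 D, ((1 - x r) ^ n - (1 - x (r - 1)) ^ n) ≤ 1 := by
  rw [sum_Icc_one_sub_pred (fun r => (1 - x r) ^ n), hx0, sub_self]
  have := pow_le_one₀ (n := n) (sub_nonneg.2 hxD₁) (by linarith)
  linarith [pow_nonneg (le_refl (0 : R)) n]

theorem stmt_7_general (D M : ℕ) (τ : ℕ → ℝ)
    (hτ : ∀ j, τ j ∈ Set.Ico (0 : ℝ) 1)
    (x : ℕ → ℝ) (hx : ∀ r, x r = ∏ j ∈ Finset.Icc 1 r, (1 - τ j))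
    (hxpos : ∀ r ≤ D, 0 < x r)
    (γr : ℕ → ℝ)
    (hγr : ∀ r, γr r = x r * ((1 - x r) ^ (M - 2) - (1 - x (r - 1)) ^ (M - 2))) :
    (∑ r ∈ Finset.Icc 1 D, γr r) ^ 2 ≤ ∑ r ∈ Finset.Icc 1 D, γr r * x r := by
  have hx_anti : Antitone x := by
    rw [funext hx]
    exact antitone_prod_Icc_one (fun j => by linarith [(hτ j).2])
      (fun j => by linarith [(hτ j).1])
  have hx_le_one (r : ℕ) : x r ≤ 1 := (hx_anti r.zero_le).trans_eq (by simp [hx])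
  have hxpos' (r : ℕ) (hr : r ∈ Icc 1 D) : 0 < x r := hxpos r (mem_Icc.1 hr).2
  have hγ_nonneg (r : ℕ) (hr : r ∈ Icc 1 D) : 0 ≤ γr r := by
    have : (1 - x (r - 1)) ^ (M - 2) ≤ (1 - x r) ^ (M - 2) :=
      pow_le_pow_left₀ (sub_nonneg.2 (hx_le_one _)) (by linarith [hx_anti (r.sub_le 1)]) _
    rw [hγr]
    exact mul_nonneg (hxpos' r hr).le (sub_nonneg.2 this)
  have hsum_div : ∑ r ∈ Icc 1 D, γr r / x r ≤ 1 := calc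
    ∑ r ∈ Icc 1 D, γr r / x r
        = ∑ r ∈ Icc 1 D, ((1 - x r) ^ (M - 2) - (1 - x (r - 1)) ^ (M - 2)) :=
      sum_congr rfl fun r hr => by rw [hγr, mul_div_cancel_left₀ _ (hxpos' r hr).ne']
    _ ≤ 1 := sum_Icc_one_pow_one_sub_sub_le_one (M - 2) (by simp [hx])
      (hxpos D le_rfl).le (hx_le_one D)
  calc (∑ r ∈ Icc 1 D, γr r) ^ 2
      ≤ (∑ r ∈ Icc 1 D, γr r * x r) * ∑ r ∈ Icc 1 D, γr r / x r :=
        sq_sum_le_sum_mul_mul_sum_div _ hγ_nonneg hxpos'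
    _ ≤ ∑ r ∈ Icc 1 D, γr r * x r :=
        mul_le_of_le_one_right
          (sum_nonneg fun r hr => mul_nonneg (hγ_nonneg r hr) (hxpos' r hr).le) hsum_div

/-- With γ_D = Σ_r γ_{D,r} and β_D = Σ_r γ_{D,r} x_r, one has γ_D² ≤ β_D. -/
theorem stmt_7 (D M : ℕ) (hD : 0 < D) (hM : 3 ≤ M) (τ : ℕ → ℝ)
    (hτ : ∀ j, τ j ∈ Set.Ico (0 : ℝ) 1)
    (x : ℕ → ℝ) (hx : ∀ r, x r = ∏ j ∈ Finset.Icc 1 r, (1 - τ j))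
    (hxpos : ∀ r ≤ D, 0 < x r)
    (γr : ℕ → ℝ)
    (hγr : ∀ r, γr r = x r * ((1 - x r) ^ (M - 2) - (1 - x (r - 1)) ^ (M - 2))) :
    (∑ r ∈ Finset.Icc 1 D, γr r) ^ 2 ≤ ∑ r ∈ Finset.Icc 1 D, γr r * x r :=
  stmt_7_general D M τ hτ x hx hxpos γr hγr
end
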